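/- The map ζ is an algebra morphism from A ⊗ H to H ⊗ A (both with the tensor-product algebra structure): for all a, a' ∈ A and h, h' ∈ H, ζ((a ⊗ h)·(a' ⊗ h')) = ζ(a ⊗ h)·ζ(a' ⊗ h'), and ζ(1_A ⊗ 1_H) = 1_H ⊗ 1_A. -/

import Mathlib

/-! Since `Δ_X` is an algebra map, so are `ξ = (p_A ⊗ p_H) ∘ Δ_X` and `(p_H ⊗ p_A) ∘ Δ_X`.
A bijective algebra map is an algebra isomorphism, so `ζ = (p_H ⊗ p_A) ∘ Δ_X ∘ ξ⁻¹` is a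
composite of algebra maps. -/

open TensorProduct

noncomputable section

universe u

variable {k A H X : Type u} [Field k]
  [Ring A] [Ring H] [Ring X]
  [Bialgebra k A] [Bialgebra k H] [Bialgebra k X]

/-- ζ := (p_H ⊗ p_A) ∘ Δ_X ∘ ξ⁻¹ : A ⊗ H → H ⊗ A. -/
def zetaC (pA : X →ₐc[k] A) (pH : X →ₐc[k] H) (ξ : X ≃ₗ[k] A ⊗[k] H) :
    A ⊗[k] H →ₗ[k] H ⊗[k] A :=
  TensorProduct.map (pH : X →ₗ[k] H) (pA : X →ₗ[k] A) ∘ₗ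
    (Coalgebra.comul : X →ₗ[k] X ⊗[k] X) ∘ₗ ξ.symm.toLinearMap

namespace Bialgebra

variable {R B U V : Type*} [CommSemiring R] [Semiring B] [Bialgebra R B]
  [Semiring U] [Algebra R U] [Semiring V] [Algebra R V]

def comulMap (f : B →ₐ[R] U) (g : B →ₐ[R] V) : B →ₐ[R] U ⊗[R] V :=
  (Algebra.TensorProduct.map f g).comp (comulAlgHom R B)

theorem comulMap_apply (f : B →ₐ[R] U) (g : B →ₐ[R] V) (x : B) :
    comulMap f g x = _root_.TensorProduct.map f.toLinearMap g.toLinearMap (Coalgebra.comul x) :=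
  rfl

end Bialgebra

open Bialgebra

theorem zetaC_toLinearEquiv_apply (pA : X →ₐc[k] A) (pH : X →ₐc[k] H) (ξ : X ≃ₐ[k] A ⊗[k] H)
    (u : A ⊗[k] H) :
    zetaC pA pH ξ.toLinearEquiv u = comulMap (pH : X →ₐ[k] H) pA (ξ.symm u) :=
  rfl

/-- ζ is an algebra morphism from A ⊗ H to H ⊗ A (both with the
tensor-product algebra structure). -/
theorem zetaC_algebra_morphism (pA : X →ₐc[k] A) (pH : X →ₐc[k] H)
    (ξ : X ≃ₗ[k] A ⊗[k] H)
    (hξ : ∀ x : X, ξ x = TensorProduct.map (pA : X →ₗ[k] A) (pH : X →ₗ[k] H)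
      (Coalgebra.comul x)) :
    (∀ (a a' : A) (h h' : H),
      zetaC pA pH ξ ((a ⊗ₜ[k] h) * (a' ⊗ₜ[k] h'))
        = zetaC pA pH ξ (a ⊗ₜ[k] h) * zetaC pA pH ξ (a' ⊗ₜ[k] h')) ∧
    zetaC pA pH ξ ((1 : A) ⊗ₜ[k] (1 : H)) = (1 : H) ⊗ₜ[k] (1 : A) := by
  have hξ_eq : ⇑ξ = comulMap (pA : X →ₐ[k] A) pH :=
    funext fun x => by rw [hξ, comulMap_apply]; rfl
  let ξAlg : X ≃ₐ[k] A ⊗[k] H := AlgEquiv.ofBijective _ (by rw [← hξ_eq]; exact ξ.bijective)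
  have hξAlg : ξ = ξAlg.toLinearEquiv := LinearEquiv.ext (congrFun hξ_eq)
  rw [hξAlg]
  refine ⟨fun a a' h h' => ?_, ?_⟩
  · simp only [zetaC_toLinearEquiv_apply, map_mul]
  · simp only [← Algebra.TensorProduct.one_def, zetaC_toLinearEquiv_apply, map_one]
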